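/- arXiv:0909.0109 — 2 statements merged into one kernel-verified Lean document; each statement's English description precedes it below -/
import Mathlib

section
/- Let A and A′ be regular closed subsets of ℝ². Then interior A meets the boundary of A′ if and only if some connected component U of interior A meets at least two distinct connected components of (interior A′) ∪ (interior of the complement of A′); equivalently, U is not contained in any single connected component of interior A′ nor in any single connected component of the exterior of A′. -/
/-- For regular closed A, A′ ⊆ ℝ², interior A meets ∂A′ iff some connected
component U of interior A is contained neither in a single connected component of
interior A′ nor in a single connected component of the exterior of A′. -/
theorem stmt_11 (A A' : Set (EuclideanSpace ℝ (Fin 2)))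
    (hreg : A = closure (interior A)) (hreg' : A' = closure (interior A')) :
    (interior A ∩ frontier A').Nonempty ↔
      ∃ x ∈ interior A,
        (¬ ∃ y ∈ interior A',
            connectedComponentIn (interior A) x ⊆ connectedComponentIn (interior A') y) ∧
        (¬ ∃ y ∈ interior A'ᶜ,
            connectedComponentIn (interior A) x ⊆ connectedComponentIn (interior A'ᶜ) y) := by
  constructor
  · rintro ⟨z, hzA, hzf⟩
    refine ⟨z, hzA, ?_, ?_⟩
    · rintro ⟨y, hy, hsub⟩
      have hz : z ∈ connectedComponentIn (interior A') y :=
        hsub (mem_connectedComponentIn hzA)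
      have hzi : z ∈ interior A' := connectedComponentIn_subset _ _ hz
      rw [frontier, Set.mem_diff] at hzf
      exact hzf.2 hzi
    · rintro ⟨y, hy, hsub⟩
      have hz : z ∈ connectedComponentIn (interior A'ᶜ) y :=
        hsub (mem_connectedComponentIn hzA)
      have hz' : z ∈ interior A'ᶜ := connectedComponentIn_subset _ _ hz
      rw [interior_compl] at hz'
      exact hz' hzf.1
  · rintro ⟨x, hx, h1, h2⟩
    by_contra hne
    rw [Set.not_nonempty_iff_eq_empty] at hne
    have hsub : interior A ⊆ interior A' ∪ interior A'ᶜ := by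
      intro z hz
      have hzf : z ∉ frontier A' := fun hf => Set.eq_empty_iff_forall_notMem.mp hne z ⟨hz, hf⟩
      rcases em (z ∈ closure A') with hc | hc
      · left
        rcases em (z ∈ interior A') with h | h
        · exact h
        · exact absurd ⟨hc, h⟩ hzf
      · right
        rw [interior_compl]
        exact hc
    set U := connectedComponentIn (interior A) x with hU
    have hUconn : IsPreconnected U := isPreconnected_connectedComponentIn
    have hUsub : U ⊆ interior A := connectedComponentIn_subset _ _
    have hxU : x ∈ U := mem_connectedComponentIn hx
    have hdisj : interior A' ∩ interior A'ᶜ = ∅ := by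
      rw [interior_compl]
      ext z
      simp only [Set.mem_inter_iff, Set.mem_compl_iff, Set.mem_empty_iff_false, iff_false,
        not_and, not_not]
      exact fun h => subset_closure (interior_subset h)
    have := hUconn.subset_or_subset isOpen_interior (isOpen_interior (s := A'ᶜ))
      (Set.disjoint_iff_inter_eq_empty.mpr hdisj) (hUsub.trans hsub)
    rcases this with h | h
    · exact h1 ⟨x, h hxU, hUconn.subset_connectedComponentIn hxU h⟩
    · exact h2 ⟨x, h hxU, hUconn.subset_connectedComponentIn hxU h⟩
end

section
/- Let A be a bounded regular closed subset of ℝ² with finitely many components, and let c be the closure of a connected component of interior A or of a connected component of the complement of A. Then the boundary of c is contained in the union of the boundaries of the other components of A (closures of the other connected components of interior A and of the complement of A). -/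
/-- The components of a plane region A: closures of connected components of the
interior of A, and closures of connected components of the complement of A. -/
def components (A : Set (EuclideanSpace ℝ (Fin 2))) :
    Set (Set (EuclideanSpace ℝ (Fin 2))) :=
  {c | (∃ x ∈ interior A, c = closure (connectedComponentIn (interior A) x)) ∨
       (∃ x ∈ Aᶜ, c = closure (connectedComponentIn Aᶜ x))}

/-! The closures of finitely many pairwise disjoint open sets with dense union cover the space,
so a point on the frontier of one closure `closure U` lies in another closure `closure V`.
It cannot lie in the interior of `closure V`: that interior is an open set missing `U`
(as `U` and `V` are disjoint and `U` is open), hence it misses `closure U` as well.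
The components of a closed set `A` are the closures of such a family of open cells: the
connected components of `interior A` and of `Aᶜ`, whose union is the complement of the
nowhere dense set `frontier A`. -/

open Set

section

variable {X : Type*} [TopologicalSpace X]

theorem Disjoint.closure_interior_closure {U V : Set X} (hUV : Disjoint U V) (hU : IsOpen U) :
    Disjoint (closure U) (interior (closure V)) :=
  ((hUV.closure_right hU).mono_right interior_subset).closure_left isOpen_interior

theorem sUnion_image_closure_eq_univ {𝒰 : Set (Set X)} (hdense : Dense (⋃₀ 𝒰))
    (hfin : (closure '' 𝒰).Finite) : ⋃₀ (closure '' 𝒰) = univ := by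
  refine eq_univ_of_univ_subset ?_
  rw [← hdense.closure_eq]
  refine closure_minimal (sUnion_mono_subsets fun _ => subset_closure) ?_
  rw [sUnion_eq_biUnion]
  exact hfin.isClosed_biUnion fun _ ⟨_, _, hc⟩ => hc ▸ isClosed_closure

theorem frontier_closure_subset_biUnion_frontier {𝒰 : Set (Set X)}
    (hopen : ∀ U ∈ 𝒰, IsOpen U) (hdisj : 𝒰.PairwiseDisjoint id) (hdense : Dense (⋃₀ 𝒰))
    (hfin : (closure '' 𝒰).Finite) {U : Set X} (hU : U ∈ 𝒰) :
    frontier (closure U) ⊆ ⋃ c ∈ closure '' 𝒰 \ {closure U}, frontier c := by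
  intro x hx
  rw [isClosed_closure.frontier_eq] at hx
  have hcover : (closure U)ᶜ ⊆ ⋃ c ∈ closure '' 𝒰 \ {closure U}, c := by
    intro y hy
    obtain ⟨c, hc, hyc⟩ := mem_sUnion.mp ((sUnion_image_closure_eq_univ hdense hfin).symm ▸
      mem_univ y)
    exact mem_biUnion ⟨hc, fun h => hy (h ▸ hyc)⟩ hyc
  have hclosed : IsClosed (⋃ c ∈ closure '' 𝒰 \ {closure U}, c) :=
    hfin.sdiff.isClosed_biUnion fun _ ⟨⟨_, _, hc⟩, _⟩ => hc ▸ isClosed_closure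
  have hxV : x ∈ ⋃ c ∈ closure '' 𝒰 \ {closure U}, c :=
    closure_minimal hcover hclosed (by rw [closure_compl]; exact hx.2)
  obtain ⟨_, ⟨⟨V, hV, rfl⟩, hVU⟩, hxV⟩ := mem_iUnion₂.mp hxV
  refine mem_biUnion ⟨⟨V, hV, rfl⟩, hVU⟩ ?_
  rw [isClosed_closure.frontier_eq]
  refine ⟨hxV, fun hxint => ?_⟩
  have hUV : U ≠ V := fun h => hVU (h ▸ rfl)
  exact disjoint_left.mp ((hdisj hU hV hUV).closure_interior_closure (hopen U hU))
    hx.1 hxint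

theorem connectedComponentIn_eq_or_disjoint (F : Set X) (x y : X) :
    connectedComponentIn F x = connectedComponentIn F y ∨
      Disjoint (connectedComponentIn F x) (connectedComponentIn F y) := by
  refine or_iff_not_imp_right.mpr fun h => ?_
  obtain ⟨z, hzx, hzy⟩ := not_disjoint_iff.mp h
  exact (connectedComponentIn_eq hzx).trans (connectedComponentIn_eq hzy).symm

theorem sUnion_image_connectedComponentIn (F : Set X) :
    ⋃₀ (connectedComponentIn F '' F) = F := by
  rw [sUnion_image]
  exact (iUnion₂_subset fun x _ => connectedComponentIn_subset F x).antisymm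
    fun x hx => mem_biUnion hx (mem_connectedComponentIn hx)

theorem pairwiseDisjoint_image_connectedComponentIn (F : Set X) :
    (connectedComponentIn F '' F).PairwiseDisjoint id := by
  rintro _ ⟨x, -, rfl⟩ _ ⟨y, -, rfl⟩ hxy
  exact (connectedComponentIn_eq_or_disjoint F x y).resolve_left hxy

def openCells (A : Set X) : Set (Set X) :=
  connectedComponentIn (interior A) '' interior A ∪ connectedComponentIn Aᶜ '' Aᶜ

theorem pairwiseDisjoint_openCells (A : Set X) : (openCells A).PairwiseDisjoint id := by
  refine (pairwiseDisjoint_image_connectedComponentIn _).union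
    (pairwiseDisjoint_image_connectedComponentIn _) ?_
  rintro _ ⟨x, -, rfl⟩ _ ⟨y, -, rfl⟩ -
  exact ((disjoint_compl_right (a := A)).mono_left interior_subset).mono
    (connectedComponentIn_subset _ x) (connectedComponentIn_subset _ y)

theorem dense_sUnion_openCells {A : Set X} (hA : IsClosed A) : Dense (⋃₀ openCells A) := by
  rw [openCells, sUnion_union, sUnion_image_connectedComponentIn,
    sUnion_image_connectedComponentIn, ← hA.isOpen_compl.interior_eq,
    ← compl_frontier_eq_union_interior]
  exact interior_eq_empty_iff_dense_compl.mp (interior_frontier hA)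

theorem IsClosed.isOpen_of_mem_openCells [LocallyConnectedSpace X] {A U : Set X}
    (hA : IsClosed A) (hU : U ∈ openCells A) : IsOpen U := by
  rcases hU with ⟨x, -, rfl⟩ | ⟨x, -, rfl⟩
  exacts [isOpen_interior.connectedComponentIn, hA.isOpen_compl.connectedComponentIn]

end

theorem components_eq_image_closure_openCells (A : Set (EuclideanSpace ℝ (Fin 2))) :
    components A = closure '' openCells A := by
  ext c
  simp only [components, openCells, image_union, image_image, mem_union, mem_image,
    mem_ofPred_eq, eq_comm (b := c)]

theorem stmt_17_general (A : Set (EuclideanSpace ℝ (Fin 2)))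
    (hreg : A = closure (interior A))
    (hfin : (components A).Finite)
    (c : Set (EuclideanSpace ℝ (Fin 2))) (hc : c ∈ components A) :
    frontier c ⊆ ⋃ c' ∈ components A \ {c}, frontier c' := by
  have hA : IsClosed A := hreg ▸ isClosed_closure
  rw [components_eq_image_closure_openCells] at hfin hc ⊢
  obtain ⟨U, hU, rfl⟩ := hc
  exact frontier_closure_subset_biUnion_frontier (fun _ => hA.isOpen_of_mem_openCells)
    (pairwiseDisjoint_openCells A) (dense_sUnion_openCells hA) hfin hU

/-- For bounded regular closed A with finitely many components, the
boundary of each component is contained in the union of the boundaries of the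
other components. -/
theorem stmt_17 (A : Set (EuclideanSpace ℝ (Fin 2)))
    (hreg : A = closure (interior A)) (hbdd : Bornology.IsBounded A)
    (hfin : (components A).Finite)
    (c : Set (EuclideanSpace ℝ (Fin 2))) (hc : c ∈ components A) :
    frontier c ⊆ ⋃ c' ∈ components A \ {c}, frontier c' :=
  stmt_17_general A hreg hfin c hc
end
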